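/- There is an absolute constant A > 0 such that the following holds (part 1 of the Estimator Lemma). Let N ≥ 1, let F be a real N×N orthogonal matrix (FᵀF = I), let U ≥ 0 satisfy |F[i,j]| ≤ U for all i,j, let ζ ∈ (0, 1/2], and let â, q̂ ∈ ℝ^N with â ≠ 0 and ‖q̂‖₂ ≤ ζ‖â‖₂. Set u = Fᵀ(â + q̂) and let τ be any real with τ ≥ ‖â‖₁·U. Let μ ∈ (0,1) and let T₁ be an integer with T₁ ≥ A·N·τ²·log(2/μ)/(ζ²·‖â‖₂²). If J : {1,…,T₁} → {0,…,N−1} is a uniformly random function (i.e., T₁ i.i.d. uniform indices sampled with replacement) and Θ(J) = (N/T₁)·Σ_{i=1}^{T₁} min(|u[J(i)]|, τ)², then with probability at least 1 − μ one has |Θ(J) − ‖u‖₂²| ≤ 9ζ·‖u‖₂². -/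

import Mathlib

/-!
Write `u = w + v` with `w = Fᵀ â` and `v = Fᵀ q̂`. Every `|w j| ≤ ‖â‖₁ U ≤ τ`, so truncating at `τ`
lowers `u j ^ 2` by at most `2 |v j| |u j|`; with Cauchy–Schwarz, `‖v‖₂ = ‖q̂‖₂ ≤ ζ ‖â‖₂` and
`‖â‖₂ ≤ 2 ‖u‖₂`, the truncated total `S = ∑ j, min (|u j|, τ)²` is within `4ζ‖u‖₂²` of `‖u‖₂²`.

The sampled sum adds `T₁` independent draws with values in `[0, τ²]` and mean `S / N`. Bounding
`exp (s x)` on `[0, b]` by its chord bounds the moment generating function of one draw by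
`exp (m / b * (exp (s b) - 1))`, so the Chernoff exponent involves the mean `m` times `b` rather
than `b²` as in Hoeffding's inequality. This is why `T₁ ≈ N τ² log (2/μ) / (ζ² ‖â‖₂²)` draws keep the
sampled sum within `5ζ‖u‖₂² T₁ / N` of its mean except with probability `μ`.
-/

open Finset Real

section Sampling

variable {ι : Type*} [Fintype ι]

lemma exp_mul_le_one_add_div_mul {s b x : ℝ} (hb : 0 < b) (hx0 : 0 ≤ x) (hxb : x ≤ b) :
    exp (s * x) ≤ 1 + x / b * (exp (s * b) - 1) := by
  have hθ0 : 0 ≤ x / b := div_nonneg hx0 hb.le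
  have hθ1 : x / b ≤ 1 := (div_le_one hb).2 hxb
  have h := convexOn_exp.2 (Set.mem_univ 0) (Set.mem_univ (s * b))
    (sub_nonneg.2 hθ1) hθ0 (sub_add_cancel 1 (x / b))
  have hx : (1 - x / b) • (0 : ℝ) + (x / b) • (s * b) = s * x := by
    simp only [smul_eq_mul]; field_simp; ring
  rw [hx, smul_eq_mul, smul_eq_mul, exp_zero] at h
  linarith

lemma sum_exp_mul_le {p : ι → ℝ} {b : ℝ} (s : ℝ) (hb : 0 < b)
    (hp0 : ∀ j, 0 ≤ p j) (hpb : ∀ j, p j ≤ b) :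
    ∑ j, exp (s * p j) ≤
      Fintype.card ι * exp ((∑ j, p j) / (Fintype.card ι * b) * (exp (s * b) - 1)) := by
  rcases isEmpty_or_nonempty ι with hι | hι
  · simp
  set y := (∑ j, p j) / (Fintype.card ι * b) * (exp (s * b) - 1)
  calc ∑ j, exp (s * p j) ≤ ∑ j, (1 + p j / b * (exp (s * b) - 1)) :=
        sum_le_sum fun j _ => exp_mul_le_one_add_div_mul hb (hp0 j) (hpb j)
    _ = Fintype.card ι * (1 + y) := by
        simp only [sum_add_distrib, ← sum_mul, ← sum_div, y]
        field_simp
        simp [mul_comm]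
    _ ≤ Fintype.card ι * exp y := by gcongr; linarith [add_one_le_exp y]

lemma card_filter_mul_exp_le (T : ℕ) (q : ι → ℝ) (e : ℝ) :
    #{J : Fin T → ι | e ≤ ∑ i, q (J i)} * exp e ≤ (∑ j, exp (q j)) ^ T := by
  classical
  calc #{J : Fin T → ι | e ≤ ∑ i, q (J i)} * exp e
      = ∑ J ∈ {J : Fin T → ι | e ≤ ∑ i, q (J i)}, exp e := by
        rw [sum_const, nsmul_eq_mul]
    _ ≤ ∑ J ∈ {J : Fin T → ι | e ≤ ∑ i, q (J i)}, exp (∑ i, q (J i)) :=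
        sum_le_sum fun J hJ => exp_le_exp.2 (mem_filter.1 hJ).2
    _ ≤ ∑ J : Fin T → ι, exp (∑ i, q (J i)) :=
        sum_le_sum_of_subset_of_nonneg (subset_univ _) fun _ _ _ => (exp_pos _).le
    _ = (∑ j, exp (q j)) ^ T := by
        simp only [exp_sum, sum_pow', Fintype.piFinset_univ]

lemma card_filter_le_mul_sum_le (T : ℕ) {p : ι → ℝ} {b : ℝ} (σ e : ℝ) (hb : 0 < b)
    (hp0 : ∀ j, 0 ≤ p j) (hpb : ∀ j, p j ≤ b) (hσ : |σ * b| ≤ 1) :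
    (#{J : Fin T → ι | e ≤ σ * ∑ i, p (J i)} : ℝ) ≤
      Fintype.card ι ^ T *
        exp (T * ((∑ j, p j) / Fintype.card ι) * (σ + σ ^ 2 * b) - e) := by
  set c := (∑ j, p j) / (Fintype.card ι * b)
  have hc : 0 ≤ c := div_nonneg (sum_nonneg fun j _ => hp0 j) (by positivity)
  have hexp : exp (σ * b) - 1 ≤ σ * b + (σ * b) ^ 2 := by
    linarith [(abs_le.1 (abs_exp_sub_one_sub_id_le hσ)).2]
  have hmarkov := card_filter_mul_exp_le T (fun j => σ * p j) e
  simp only [← mul_sum] at hmarkov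
  have hmgf : (∑ j, exp (σ * p j)) ^ T ≤
      Fintype.card ι ^ T * exp (T * (c * (σ * b + (σ * b) ^ 2))) := by
    rw [exp_nat_mul, ← mul_pow]
    gcongr
    exact (sum_exp_mul_le σ hb hp0 hpb).trans (by gcongr)
  have hcoef : T * (c * (σ * b + (σ * b) ^ 2)) =
      T * ((∑ j, p j) / Fintype.card ι) * (σ + σ ^ 2 * b) := by
    simp only [c]; field_simp
  rw [hcoef] at hmgf
  rw [sub_eq_add_neg, exp_add, ← mul_assoc, exp_neg, ← div_eq_mul_inv, le_div_iff₀ (exp_pos e)]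
  exact hmarkov.trans hmgf

lemma exists_chernoff_exponent {M b t L : ℝ} (hb : 0 < b) (ht : 0 < t)
    (hvar : 4 * M * b * L ≤ t ^ 2) (hrange : 2 * b * L ≤ t) :
    ∃ s, 0 ≤ s ∧ s * b ≤ 1 ∧ M * s ^ 2 * b - s * t ≤ -L := by
  rcases le_or_gt t (2 * M) with hsmall | hlarge
  · have hM : 0 < M := by linarith
    refine ⟨t / (2 * M * b), by positivity, ?_, ?_⟩
    · rw [div_mul_eq_mul_div, div_le_one (by positivity)]
      exact mul_le_mul_of_nonneg_right hsmall hb.le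
    · have : M * (t / (2 * M * b)) ^ 2 * b - t / (2 * M * b) * t = -(t ^ 2 / (4 * M * b)) := by
        field_simp; ring
      rw [this, neg_le_neg_iff, le_div_iff₀ (by positivity)]
      linarith
  · refine ⟨1 / b, by positivity, (div_mul_cancel₀ 1 hb.ne').le, ?_⟩
    have : M * (1 / b) ^ 2 * b - 1 / b * t = (M - t) / b := by field_simp
    rw [this, div_le_iff₀ hb]
    linarith

theorem le_card_abs_sum_sub_le (T : ℕ) {p : ι → ℝ} {b t L : ℝ} (hb : 0 < b)
    (hp0 : ∀ j, 0 ≤ p j) (hpb : ∀ j, p j ≤ b) (ht : 0 < t)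
    (hvar : 4 * (T * ((∑ j, p j) / Fintype.card ι)) * b * L ≤ t ^ 2)
    (hrange : 2 * b * L ≤ t) :
    (1 - 2 * exp (-L)) * Fintype.card ι ^ T ≤
      #{J : Fin T → ι | |∑ i, p (J i) - T * ((∑ j, p j) / Fintype.card ι)| ≤ t} := by
  classical
  set M := T * ((∑ j, p j) / Fintype.card ι)
  obtain ⟨s, hs0, hsb, hexp⟩ := exists_chernoff_exponent hb ht hvar hrange
  have hs : |s * b| ≤ 1 := by rwa [abs_of_nonneg (by positivity)]
  have hs' : |-s * b| ≤ 1 := by rwa [neg_mul, abs_neg]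
  have hupper := card_filter_le_mul_sum_le T s (s * (M + t)) hb hp0 hpb hs
  have hlower := card_filter_le_mul_sum_le T (-s) (-s * (M - t)) hb hp0 hpb hs'
  have hbad : ({J | ¬ |∑ i, p (J i) - M| ≤ t} : Finset (Fin T → ι)) ⊆
      ({J | s * (M + t) ≤ s * ∑ i, p (J i)} : Finset (Fin T → ι)) ∪
        ({J | -s * (M - t) ≤ -s * ∑ i, p (J i)} : Finset (Fin T → ι)) := by
    intro J
    simp only [mem_filter, mem_univ, true_and, mem_union, not_le]
    intro h
    rcases lt_abs.1 h with h | h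
    · left; exact mul_le_mul_of_nonneg_left (by linarith) hs0
    · right
      rw [neg_mul, neg_mul, neg_le_neg_iff]
      exact mul_le_mul_of_nonneg_left (by linarith) hs0
  have hsplit := card_filter_add_card_filter_not (s := univ) fun J : Fin T → ι =>
    |∑ i, p (J i) - M| ≤ t
  rw [card_univ, Fintype.card_fun, Fintype.card_fin] at hsplit
  have hbad_card := (card_le_card hbad).trans (card_union_le _ _)
  have hup : M * (s + s ^ 2 * b) - s * (M + t) = M * s ^ 2 * b - s * t := by ring
  have hlow : M * (-s + (-s) ^ 2 * b) - -s * (M - t) = M * s ^ 2 * b - s * t := by ring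
  rw [hup] at hupper
  rw [hlow] at hlower
  have htail : (Fintype.card ι : ℝ) ^ T * exp (M * s ^ 2 * b - s * t) ≤
      Fintype.card ι ^ T * exp (-L) := by gcongr
  rify at hsplit hbad_card
  linarith

theorem le_card_abs_estimator_sub_le [Nonempty ι] (T : ℕ)
    {p : ι → ℝ} {b ζ E L : ℝ} (hb : 0 < b) (hp0 : ∀ j, 0 ≤ p j) (hpb : ∀ j, p j ≤ b)
    (hζ0 : 0 < ζ) (hζ1 : ζ ≤ 1) (hT : 0 < T) (hE : 0 < E)
    (hSE : ∑ j, p j ≤ E) (hbias : E - ∑ j, p j ≤ 4 * ζ * E)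
    (hL : 2 * Fintype.card ι * b * L ≤ T * ζ ^ 2 * E) :
    (1 - 2 * exp (-L)) * Fintype.card ι ^ T ≤
      #{J : Fin T → ι | |Fintype.card ι / T * ∑ i, p (J i) - E| ≤ 9 * ζ * E} := by
  set n : ℝ := (Fintype.card ι : ℝ)
  set S := ∑ j, p j
  have hn : 0 < n := by simp [n, Fintype.card_pos]
  have hT' : (0 : ℝ) < T := by exact_mod_cast hT
  set t := T * (5 * ζ * E) / n
  have hvar : 4 * (T * (S / n)) * b * L ≤ t ^ 2 := by
    have hS : 4 * (T * (S / n)) * b * L * n ^ 2 ≤ t ^ 2 * n ^ 2 := by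
      have : t ^ 2 * n ^ 2 = 25 * (T * ζ * E) ^ 2 := by simp only [t]; field_simp; ring
      rw [this]
      have : 4 * (T * (S / n)) * b * L * n ^ 2 = 2 * T * S * (2 * n * b * L) := by
        field_simp; ring
      rw [this]
      have hS0 : 0 ≤ S := sum_nonneg fun j _ => hp0 j
      calc 2 * T * S * (2 * n * b * L) ≤ 2 * T * S * (T * ζ ^ 2 * E) := by gcongr
        _ ≤ 2 * T * E * (T * ζ ^ 2 * E) := by gcongr
        _ ≤ 25 * (T * ζ * E) ^ 2 := by nlinarith [sq_nonneg (T * ζ * E)]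
    exact le_of_mul_le_mul_right hS (by positivity)
  have hrange : 2 * b * L ≤ t := by
    rw [le_div_iff₀ hn]
    nlinarith [mul_nonneg (by positivity : (0 : ℝ) ≤ T * ζ * E) (sub_nonneg.2 hζ1)]
  refine (le_card_abs_sum_sub_le T hb hp0 hpb (by positivity) hvar hrange).trans ?_
  refine Nat.cast_le.2 (card_le_card fun J => ?_)
  simp only [mem_filter, mem_univ, true_and]
  intro hJ
  have hSE' : |S - E| ≤ 4 * ζ * E := by rw [abs_of_nonpos (by linarith)]; linarith
  calc |n / T * ∑ i, p (J i) - E|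
      = |n / T * (∑ i, p (J i) - T * (S / n)) + (S - E)| := by congr 1; field_simp; ring
    _ ≤ |n / T * (∑ i, p (J i) - T * (S / n))| + |S - E| := abs_add_le _ _
    _ = n / T * |∑ i, p (J i) - T * (S / n)| + |S - E| := by
        rw [abs_mul, abs_of_pos (div_pos hn hT')]
    _ ≤ n / T * t + 4 * ζ * E := by gcongr
    _ = 9 * ζ * E := by simp only [t]; field_simp; ring

end Sampling

section Truncation

variable {ι : Type*} [Fintype ι]

lemma sq_sub_min_abs_sq_le {u w τ : ℝ} (hw : |w| ≤ τ) :
    u ^ 2 - min |u| τ ^ 2 ≤ 2 * (|u - w| * |u|) := by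
  have hlow : |u| - |u - w| ≤ min |u| τ :=
    le_min (by linarith [abs_nonneg (u - w)]) (by linarith [abs_sub_abs_le_abs_sub u w])
  have hmin0 : 0 ≤ min |u| τ := le_min (abs_nonneg u) ((abs_nonneg w).trans hw)
  nlinarith [sq_abs u, abs_nonneg (u - w), abs_nonneg u, min_le_left |u| τ]

lemma sum_sq_sub_sum_min_abs_sq_le {u w : ι → ℝ} {τ : ℝ} (hw : ∀ j, |w j| ≤ τ) :
    ∑ j, u j ^ 2 - ∑ j, min |u j| τ ^ 2 ≤
      2 * (√(∑ j, (u j - w j) ^ 2) * √(∑ j, u j ^ 2)) := by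
  calc ∑ j, u j ^ 2 - ∑ j, min |u j| τ ^ 2 ≤ 2 * ∑ j, |u j - w j| * |u j| := by
        rw [← sum_sub_distrib, mul_sum]
        exact sum_le_sum fun j _ => sq_sub_min_abs_sq_le (hw j)
    _ ≤ 2 * (√(∑ j, (u j - w j) ^ 2) * √(∑ j, u j ^ 2)) := by
        gcongr
        simpa only [sq_abs] using sum_mul_le_sqrt_mul_sqrt univ (fun j => |u j - w j|) (|u ·|)

lemma sqrt_sum_sq_le_two_mul {a q : ι → ℝ} {ζ : ℝ} (hζ : ζ ≤ 1 / 2)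
    (hq : √(∑ i, q i ^ 2) ≤ ζ * √(∑ i, a i ^ 2)) :
    √(∑ i, a i ^ 2) ≤ 2 * √(∑ i, (a i + q i) ^ 2) := by
  have hnorm (x : ι → ℝ) : √(∑ i, x i ^ 2) = ‖WithLp.toLp 2 x‖ := by
    simp [EuclideanSpace.norm_eq]
  have htri : √(∑ i, a i ^ 2) ≤ √(∑ i, (a i + q i) ^ 2) + √(∑ i, q i ^ 2) := by
    have := norm_sub_le (WithLp.toLp 2 (a + q)) (WithLp.toLp 2 q)
    rwa [← WithLp.toLp_sub, add_sub_cancel_right, ← hnorm, ← hnorm, ← hnorm] at this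
  nlinarith [sqrt_nonneg (∑ i, a i ^ 2)]

end Truncation

section Orthogonal

open Matrix

lemma abs_transpose_mulVec_le {m n : Type*} [Fintype m] {F : Matrix m n ℝ} {U : ℝ}
    (hFU : ∀ i j, |F i j| ≤ U) (a : m → ℝ) (j : n) :
    |(Fᵀ *ᵥ a) j| ≤ (∑ i, |a i|) * U := by
  calc |(Fᵀ *ᵥ a) j| ≤ ∑ i, |F i j| * |a i| := by
        simpa [mulVec, dotProduct, abs_mul] using abs_sum_le_sum_abs (fun i => F i j * a i) univ
    _ ≤ ∑ i, U * |a i| := by gcongr with i; exact hFU i j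
    _ = (∑ i, |a i|) * U := by rw [sum_mul]; simp only [mul_comm]

variable {n : Type*} [Fintype n] [DecidableEq n] {F : Matrix n n ℝ}

lemma sum_sq_transpose_mulVec (hF : Fᵀ * F = 1) (x : n → ℝ) :
    ∑ j, (Fᵀ *ᵥ x) j ^ 2 = ∑ i, x i ^ 2 := by
  simp only [sq]
  change (Fᵀ *ᵥ x) ⬝ᵥ (Fᵀ *ᵥ x) = x ⬝ᵥ x
  rw [dotProduct_mulVec, vecMul_transpose, mulVec_mulVec, mul_eq_one_comm.mp hF, one_mulVec]

lemma pos_of_abs_entry_le [Nonempty n] (hF : Fᵀ * F = 1) {U : ℝ} (hFU : ∀ i j, |F i j| ≤ U) :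
    0 < U := by
  by_contra! hU
  have : F = 0 := by ext i j; exact abs_nonpos_iff.mp ((hFU i j).trans hU)
  simp [this] at hF

variable {a q : n → ℝ} {ζ : ℝ}

lemma sum_sq_le_four_mul_sum_sq_transpose_mulVec (hF : Fᵀ * F = 1)
    (hζ : ζ ≤ 1 / 2) (hq : √(∑ i, q i ^ 2) ≤ ζ * √(∑ i, a i ^ 2)) :
    ∑ i, a i ^ 2 ≤ 4 * ∑ j, (Fᵀ *ᵥ (a + q)) j ^ 2 := by
  have h := pow_le_pow_left₀ (sqrt_nonneg _) (sqrt_sum_sq_le_two_mul hζ hq) 2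
  rw [mul_pow, sq_sqrt (sum_nonneg fun _ _ => sq_nonneg _),
    sq_sqrt (sum_nonneg fun _ _ => sq_nonneg _)] at h
  simpa only [sum_sq_transpose_mulVec hF, Pi.add_apply, show (2 : ℝ) ^ 2 = 4 by norm_num] using h

lemma sum_sq_sub_sum_min_abs_sq_transpose_mulVec_le (hF : Fᵀ * F = 1) {U τ : ℝ}
    (hFU : ∀ i j, |F i j| ≤ U) (hζ0 : 0 ≤ ζ) (hζ : ζ ≤ 1 / 2)
    (hq : √(∑ i, q i ^ 2) ≤ ζ * √(∑ i, a i ^ 2)) (hτ : (∑ i, |a i|) * U ≤ τ) :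
    ∑ j, (Fᵀ *ᵥ (a + q)) j ^ 2 - ∑ j, min |(Fᵀ *ᵥ (a + q)) j| τ ^ 2 ≤
      4 * ζ * ∑ j, (Fᵀ *ᵥ (a + q)) j ^ 2 := by
  set u := Fᵀ *ᵥ (a + q)
  have hw (j : n) : |(Fᵀ *ᵥ a) j| ≤ τ := (abs_transpose_mulVec_le hFU a j).trans hτ
  have huw : ∑ j, (u j - (Fᵀ *ᵥ a) j) ^ 2 = ∑ i, q i ^ 2 := by
    simp only [u, mulVec_add, Pi.add_apply, add_sub_cancel_left]
    exact sum_sq_transpose_mulVec hF q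
  have ha : √(∑ i, a i ^ 2) ≤ 2 * √(∑ j, u j ^ 2) := by
    simpa only [u, sum_sq_transpose_mulVec hF, Pi.add_apply] using sqrt_sum_sq_le_two_mul hζ hq
  calc ∑ j, u j ^ 2 - ∑ j, min |u j| τ ^ 2
      ≤ 2 * (√(∑ i, q i ^ 2) * √(∑ j, u j ^ 2)) := huw ▸ sum_sq_sub_sum_min_abs_sq_le hw
    _ ≤ 2 * (ζ * (2 * √(∑ j, u j ^ 2)) * √(∑ j, u j ^ 2)) := by gcongr; exact hq.trans (by gcongr)
    _ = 4 * ζ * ∑ j, u j ^ 2 := by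
        rw [mul_assoc ζ, mul_assoc 2, mul_self_sqrt (sum_nonneg fun j _ => sq_nonneg _)]; ring

end Orthogonal

open Classical in
theorem stmt_3 :
    ∃ A : ℝ, 0 < A ∧
      ∀ N : ℕ, 1 ≤ N →
      ∀ F : Matrix (Fin N) (Fin N) ℝ, F.transpose * F = 1 →
      ∀ U : ℝ, 0 ≤ U → (∀ i j, |F i j| ≤ U) →
      ∀ ζ : ℝ, 0 < ζ → ζ ≤ 1 / 2 →
      ∀ ahat qhat : Fin N → ℝ, ahat ≠ 0 →
      Real.sqrt (∑ i, qhat i ^ 2) ≤ ζ * Real.sqrt (∑ i, ahat i ^ 2) →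
      ∀ u : Fin N → ℝ, u = F.transpose.mulVec (ahat + qhat) →
      ∀ τ : ℝ, (∑ i, |ahat i|) * U ≤ τ →
      ∀ μ : ℝ, 0 < μ → μ < 1 →
      ∀ T1 : ℕ,
        A * N * τ ^ 2 * Real.log (2 / μ) / (ζ ^ 2 * ∑ i, ahat i ^ 2) ≤ T1 →
      (1 - μ) * (Fintype.card (Fin T1 → Fin N) : ℝ) ≤
        ((Finset.univ.filter (fun J : Fin T1 → Fin N =>
          |(N : ℝ) / (T1 : ℝ) * ∑ i : Fin T1, (min |u (J i)| τ) ^ 2 - ∑ i, u i ^ 2| ≤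
            9 * ζ * ∑ i, u i ^ 2)).card : ℝ) := by
  refine ⟨8, by norm_num, ?_⟩
  intro N hN F hF U _ hFU ζ hζ0 hζ2 ahat qhat ha hq u hu τ hτ μ hμ0 hμ1 T1 hT1
  have : Nonempty (Fin N) := ⟨⟨0, hN⟩⟩
  obtain ⟨i, hi⟩ : ∃ i, ahat i ≠ 0 := Function.ne_iff.1 ha
  have ha2 : 0 < ∑ i, ahat i ^ 2 := sum_pos' (fun _ _ => sq_nonneg _) ⟨i, mem_univ _, by positivity⟩
  have ha1 : 0 < ∑ i, |ahat i| := sum_pos' (fun _ _ => abs_nonneg _) ⟨i, mem_univ _, by positivity⟩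
  have hτ0 : 0 < τ := (mul_pos ha1 (pos_of_abs_entry_le hF hFU)).trans_le hτ
  have haE := hu ▸ sum_sq_le_four_mul_sum_sq_transpose_mulVec hF hζ2 hq
  have hL : 0 < log (2 / μ) := log_pos (by rw [lt_div_iff₀ hμ0]; linarith)
  have hT0 : (0 : ℝ) < T1 := (div_pos (by positivity) (by positivity)).trans_le hT1
  have hTE : 2 * Fintype.card (Fin N) * τ ^ 2 * log (2 / μ) ≤ T1 * ζ ^ 2 * ∑ i, u i ^ 2 := by
    rw [div_le_iff₀ (by positivity)] at hT1
    rw [Fintype.card_fin]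
    nlinarith [mul_le_mul_of_nonneg_left haE (by positivity : (0 : ℝ) ≤ T1 * ζ ^ 2)]
  have hmin_le (j : Fin N) : min |u j| τ ^ 2 ≤ u j ^ 2 := by
    simpa only [sq_abs] using pow_le_pow_left₀ (by positivity) (min_le_left |u j| τ) 2
  have key := le_card_abs_estimator_sub_le T1 (p := fun j => min |u j| τ ^ 2) (b := τ ^ 2)
    (by positivity) (fun _ => sq_nonneg _)
    (fun j => pow_le_pow_left₀ (by positivity) (min_le_right _ _) 2) hζ0 (by linarith)
    (by exact_mod_cast hT0) (by linarith) (sum_le_sum fun j _ => hmin_le j)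
    (hu ▸ sum_sq_sub_sum_min_abs_sq_transpose_mulVec_le hF hFU hζ0.le hζ2 hq hτ) hTE
  rw [Fintype.card_fin, exp_neg, exp_log (by positivity), inv_div,
    mul_div_cancel₀ μ two_ne_zero] at key
  rwa [Fintype.card_fun, Fintype.card_fin, Fintype.card_fin, Nat.cast_pow]
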